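/- arXiv:1907.00368 — 2 statements merged into one kernel-verified Lean document; each statement's English description precedes it below -/
import Mathlib

section
/- The function d ↦ (sin d − d·cos d)²/(1 − cos d)³ is (strictly) monotone increasing on the open interval (0, π). -/
/-!
With `N d = sin d - d cos d` and `D d = 1 - cos d`, the derivative of `N² / D³` is
`sin d · D² · N · (2d + d cos d - 3 sin d) / D⁶`. On `(0, π)` every factor is positive: the
last two are the top of the chain `2d + d cos d - 3 sin d`, `2 - 2 cos d - d sin d`, `N`,
each of which vanishes at `0` and has the next one as its derivative, the last derivative
being `d sin d > 0`.
-/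

open Real Set

lemma pos_of_eq_zero_of_hasDerivAt_pos {f f' : ℝ → ℝ} {a b x : ℝ}
    (hf : ∀ y, HasDerivAt f (f' y) y) (hfa : f a = 0) (hf' : ∀ y ∈ Ioo a b, 0 < f' y)
    (hx : x ∈ Ioc a b) : 0 < f x := by
  have hmono : StrictMonoOn f (Icc a b) :=
    strictMonoOn_of_deriv_pos (convex_Icc a b)
      (fun y _ ↦ (hf y).continuousAt.continuousWithinAt)
      (fun y hy ↦ by rw [(hf y).deriv]; exact hf' y (by rwa [interior_Icc] at hy))
  simpa [hfa] using hmono (left_mem_Icc.2 (hx.1.trans_le hx.2).le) (Ioc_subset_Icc_self hx) hx.1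

lemma hasDerivAt_sin_sub_mul_cos (x : ℝ) :
    HasDerivAt (fun y ↦ sin y - y * cos y) (x * sin x) x :=
  ((hasDerivAt_sin x).sub ((hasDerivAt_id' x).mul (hasDerivAt_cos x))).congr_deriv (by ring)

lemma sin_sub_mul_cos_pos {x : ℝ} (hx : x ∈ Ioc 0 π) : 0 < sin x - x * cos x :=
  (pos_of_eq_zero_of_hasDerivAt_pos hasDerivAt_sin_sub_mul_cos (by simp)
    (fun y hy ↦ mul_pos hy.1 (sin_pos_of_pos_of_lt_pi hy.1 hy.2)) hx :)

lemma hasDerivAt_two_sub_two_mul_cos_sub_mul_sin (x : ℝ) :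
    HasDerivAt (fun y ↦ 2 - 2 * cos y - y * sin y) (sin x - x * cos x) x :=
  (((hasDerivAt_cos x).const_mul 2).const_sub 2 |>.sub
    ((hasDerivAt_id' x).mul (hasDerivAt_sin x))).congr_deriv (by ring)

lemma two_sub_two_mul_cos_sub_mul_sin_pos {x : ℝ} (hx : x ∈ Ioc 0 π) :
    0 < 2 - 2 * cos x - x * sin x :=
  (pos_of_eq_zero_of_hasDerivAt_pos hasDerivAt_two_sub_two_mul_cos_sub_mul_sin (by simp)
    (fun _ hy ↦ sin_sub_mul_cos_pos (Ioo_subset_Ioc_self hy)) hx :)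

lemma hasDerivAt_two_mul_add_mul_cos_sub_three_mul_sin (x : ℝ) :
    HasDerivAt (fun y ↦ 2 * y + y * cos y - 3 * sin y) (2 - 2 * cos x - x * sin x) x :=
  ((((hasDerivAt_id' x).const_mul 2).add ((hasDerivAt_id' x).mul (hasDerivAt_cos x))).sub
    ((hasDerivAt_sin x).const_mul 3)).congr_deriv (by ring)

lemma two_mul_add_mul_cos_sub_three_mul_sin_pos {x : ℝ} (hx : x ∈ Ioc 0 π) :
    0 < 2 * x + x * cos x - 3 * sin x :=
  (pos_of_eq_zero_of_hasDerivAt_pos hasDerivAt_two_mul_add_mul_cos_sub_three_mul_sin (by simp)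
    (fun _ hy ↦ two_sub_two_mul_cos_sub_mul_sin_pos (Ioo_subset_Ioc_self hy)) hx :)

lemma one_sub_cos_pos {x : ℝ} (hx : x ∈ Ioo 0 π) : 0 < 1 - cos x :=
  sub_pos.2 (by simpa using cos_lt_cos_of_nonneg_of_le_pi le_rfl hx.2.le hx.1)

lemma hasDerivAt_sin_sub_mul_cos_sq_div_one_sub_cos_pow_three {x : ℝ} (hx : x ∈ Ioo 0 π) :
    HasDerivAt (fun d ↦ (sin d - d * cos d) ^ 2 / (1 - cos d) ^ 3)
      (sin x * (1 - cos x) ^ 2 * (sin x - x * cos x) * (2 * x + x * cos x - 3 * sin x) /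
        ((1 - cos x) ^ 3) ^ 2) x :=
  (((hasDerivAt_sin_sub_mul_cos x).fun_pow 2).fun_div (((hasDerivAt_cos x).const_sub 1).fun_pow 3)
    (pow_ne_zero 3 (one_sub_cos_pos hx).ne')).congr_deriv (by ring)

theorem stmt_4 :
    StrictMonoOn (fun d : ℝ => (Real.sin d - d * Real.cos d) ^ 2 / (1 - Real.cos d) ^ 3)
      (Set.Ioo 0 π) := by
  refine strictMonoOn_of_deriv_pos (convex_Ioo 0 π)
    (fun x hx ↦ (hasDerivAt_sin_sub_mul_cos_sq_div_one_sub_cos_pow_three hx).continuousAt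
      |>.continuousWithinAt) fun x hx ↦ ?_
  rw [interior_Ioo] at hx
  rw [(hasDerivAt_sin_sub_mul_cos_sq_div_one_sub_cos_pow_three hx).deriv]
  have hD := one_sub_cos_pos hx
  have hN := sin_sub_mul_cos_pos (Ioo_subset_Ioc_self hx)
  have hg := two_mul_add_mul_cos_sub_three_mul_sin_pos (Ioo_subset_Ioc_self hx)
  have hsin := sin_pos_of_pos_of_lt_pi hx.1 hx.2
  positivity
end

section
/- For all d in (0, π), (1/π²)·(sin d − d·cos d)²/(1 − cos d)³ ≥ 8/(9π²). -/
/-! With `s = sin (d/2)` we have `1 - cos d = 2 s²`, so the claim is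
`9 (sin d - d cos d)² ≥ 64 s⁶`, i.e. `sin d - d cos d ≥ (8/3) s³` on `[0, π]`. Both sides vanish
at `0`, and the derivative of their difference is
`d sin d - 4 s² cos (d/2) = 2 s cos (d/2) (d - 2 s)`, which is nonnegative since `s < d/2`. -/

open Real Set

namespace Real

lemma one_sub_cos_eq_two_mul_sin_half_sq (x : ℝ) : 1 - cos x = 2 * sin (x / 2) ^ 2 := by
  have h := cos_two_mul' (x / 2)
  rw [show 2 * (x / 2) = x by ring] at h
  linarith [sin_sq_add_cos_sq (x / 2)]

lemma sin_eq_two_mul_sin_half_mul_cos_half (x : ℝ) : sin x = 2 * sin (x / 2) * cos (x / 2) := by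
  rw [← sin_two_mul, show 2 * (x / 2) = x by ring]

lemma hasDerivAt_sin_sub_mul_cos (x : ℝ) :
    HasDerivAt (fun x => sin x - x * cos x) (x * sin x) x :=
  ((hasDerivAt_sin x).sub ((hasDerivAt_id' x).mul (hasDerivAt_cos x))).congr_deriv (by ring)

lemma hasDerivAt_sin_half_pow_three (x : ℝ) :
    HasDerivAt (fun x => sin (x / 2) ^ 3) (3 / 2 * sin (x / 2) ^ 2 * cos (x / 2)) x :=
  (((hasDerivAt_id' x).div_const 2).sin.pow 3).congr_deriv (by push_cast; ring)

lemma eight_div_three_mul_sin_half_pow_three_le {x : ℝ} (hx : x ∈ Icc 0 π) :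
    8 / 3 * sin (x / 2) ^ 3 ≤ sin x - x * cos x := by
  let g : ℝ → ℝ := fun x => sin x - x * cos x - 8 / 3 * sin (x / 2) ^ 3
  have hg_deriv (y : ℝ) :
      HasDerivAt g (y * sin y - 4 * sin (y / 2) ^ 2 * cos (y / 2)) y :=
    ((hasDerivAt_sin_sub_mul_cos y).sub
      ((hasDerivAt_sin_half_pow_three y).const_mul (8 / 3))).congr_deriv (by ring)
  have hg_mono : MonotoneOn g (Icc 0 π) := by
    refine monotoneOn_of_hasDerivWithinAt_nonneg (convex_Icc 0 π)
      (by fun_prop) (fun y _ => (hg_deriv y).hasDerivWithinAt) ?_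
    intro y hy
    rw [interior_Icc] at hy
    obtain ⟨hy0, hyπ⟩ := hy
    have hs : 0 < sin (y / 2) := sin_pos_of_pos_of_lt_pi (by linarith) (by linarith [pi_pos])
    have hc : 0 < cos (y / 2) := cos_pos_of_mem_Ioo ⟨by linarith [pi_pos], by linarith⟩
    have hsy : sin (y / 2) < y / 2 := sin_lt (by linarith)
    have hfactor : y * sin y - 4 * sin (y / 2) ^ 2 * cos (y / 2)
        = 2 * sin (y / 2) * cos (y / 2) * (y - 2 * sin (y / 2)) := by
      rw [sin_eq_two_mul_sin_half_mul_cos_half y]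
      ring
    rw [hfactor]
    have : 0 < y - 2 * sin (y / 2) := by linarith
    positivity
  have hg0 : g 0 = 0 := by simp [g]
  have hgx : 0 ≤ g x := hg0 ▸ hg_mono (left_mem_Icc.mpr pi_pos.le) hx hx.1
  exact sub_nonneg.mp hgx

lemma eight_mul_one_sub_cos_pow_three_le {x : ℝ} (hx : x ∈ Icc 0 π) :
    8 * (1 - cos x) ^ 3 ≤ 9 * (sin x - x * cos x) ^ 2 := by
  have hs : 0 ≤ sin (x / 2) :=
    sin_nonneg_of_nonneg_of_le_pi (by linarith [hx.1]) (by linarith [hx.2, pi_pos])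
  have hsq := pow_le_pow_left₀ (by positivity) (eight_div_three_mul_sin_half_pow_three_le hx) 2
  rw [one_sub_cos_eq_two_mul_sin_half_sq]
  linarith

end Real

theorem stmt_5 (d : ℝ) (hd : d ∈ Set.Ioo 0 π) :
    (1 / π ^ 2) * (Real.sin d - d * Real.cos d) ^ 2 / (1 - Real.cos d) ^ 3
      ≥ 8 / (9 * π ^ 2) := by
  have hcos : 0 < 1 - cos d := by
    rw [one_sub_cos_eq_two_mul_sin_half_sq]
    have hs : 0 < sin (d / 2) :=
      sin_pos_of_pos_of_lt_pi (by linarith [hd.1]) (by linarith [hd.2, pi_pos])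
    positivity
  have key := eight_mul_one_sub_cos_pow_three_le (Ioo_subset_Icc_self hd)
  rw [ge_iff_le, le_div_iff₀ (by positivity)]
  field_simp
  linarith
end
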